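/- For every $r$ with $0 < r \leq \frac{\log 3}{2}$, one has $\min\big( 2 F(r),\ C(r) \big) \leq \sqrt{2}$, where $F(r) = \frac{e^{\pi\sqrt 3}\, C\big(\frac{\log 3}{2}\big)\, e^{-\pi/\sinh(r)}}{3\sinh^2(r)}$ and $C(r) = \left(\frac{4\pi}{3}\left(1 - \operatorname{sech}^6(r/2)\right)\right)^{-1/2}$. -/

import Mathlib

open Real

/-- Teo's function `C(r) = ((4π/3)(1 - sech⁶(r/2)))^{-1/2}`. -/
noncomputable def TeoC (r : ℝ) : ℝ :=
  (Real.sqrt (4 * π / 3 * (1 - (1 / Real.cosh (r / 2)) ^ 6)))⁻¹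

/-- The collar bound from Part (3) of Proposition 3.3. -/
noncomputable def F (r : ℝ) : ℝ :=
  Real.exp (π * Real.sqrt 3) * TeoC (Real.log 3 / 2) * Real.exp (-π / Real.sinh r)
    / (3 * Real.sinh r ^ 2)

/-!
Split according to whether `sinh r ≤ 1/2`. Since `s ↦ exp (-π/s) / s²` is increasing on
`(0, π/2]`, for `sinh r ≤ 1/2` the bound `F r ≤ F (arsinh (1/2))` leaves the explicit
quantity `(4/3) C(log 3 / 2) exp (-π (2 - √3))`, and `cosh (log 3 / 2) = 2/√3` gives
`C(log 3 / 2) ≤ 1.15`. For `sinh r ≥ 1/2`, `C` is a decreasing function of `cosh r ≥ 1.1`,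
and already `C ≤ √2` there.
-/

open Set

theorem monotoneOn_exp_neg_div_div_sq (a : ℝ) :
    MonotoneOn (fun s => exp (-(a / s)) / s ^ 2) (Ioc 0 (a / 2)) := by
  rintro s ⟨hs, -⟩ b ⟨-, hba⟩ hsb
  have hb : 0 < b := hs.trans_le hsb
  set d := a / s - a / b with hd
  have hd_half : b / s ≤ 1 + d / 2 := by
    have hgap : 1 + d / 2 - b / s = (b - s) * (a - 2 * b) / (2 * s * b) := by
      rw [hd]; field_simp; ring
    have hgap_nonneg : 0 ≤ (b - s) * (a - 2 * b) / (2 * s * b) := by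
      apply div_nonneg (mul_nonneg _ _) <;> linarith [mul_pos hs hb]
    linarith
  have hratio : b ^ 2 ≤ exp d * s ^ 2 := by
    have : (b / s) ^ 2 ≤ exp d :=
      calc (b / s) ^ 2 ≤ (1 + d / 2) ^ 2 := by gcongr
        _ ≤ exp (d / 2) ^ 2 := by
          gcongr
          · linarith [div_pos hb hs]
          · linarith [add_one_le_exp (d / 2)]
        _ = exp d := by rw [sq, ← exp_add, add_halves]
    rwa [div_pow, div_le_iff₀ (by positivity)] at this
  show exp (-(a / s)) / s ^ 2 ≤ exp (-(a / b)) / b ^ 2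
  rw [div_le_div_iff₀ (by positivity) (by positivity)]
  calc exp (-(a / s)) * b ^ 2 ≤ exp (-(a / s)) * (exp d * s ^ 2) := by gcongr
    _ = exp (-(a / b)) * s ^ 2 := by rw [← mul_assoc, ← exp_add, hd]; ring_nf

theorem one_div_cosh_half_pow_six (r : ℝ) :
    (1 / cosh (r / 2)) ^ 6 = (2 / (1 + cosh r)) ^ 3 := by
  have hsq : cosh (r / 2) ^ 2 = (1 + cosh r) / 2 := by
    have := cosh_two_mul (r / 2)
    rw [mul_div_cancel₀ r two_ne_zero, sinh_sq] at this
    linarith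
  rw [show (6 : ℕ) = 2 * 3 from rfl, pow_mul, div_pow, hsq]
  field_simp

theorem TeoC_le_of_le_cosh {r c q : ℝ} (hc : 0 ≤ c) (hcosh : c ≤ cosh r) (hq : 0 < q)
    (h : (q ^ 2)⁻¹ ≤ 4 * π / 3 * (1 - (2 / (1 + c)) ^ 3)) : TeoC r ≤ q := by
  have hX : (q ^ 2)⁻¹ ≤ 4 * π / 3 * (1 - (1 / cosh (r / 2)) ^ 6) := by
    rw [one_div_cosh_half_pow_six]
    exact h.trans (by gcongr)
  have hX0 : 0 < 4 * π / 3 * (1 - (1 / cosh (r / 2)) ^ 6) :=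
    (inv_pos.2 (pow_pos hq 2)).trans_le hX
  rw [TeoC, inv_le_comm₀ (sqrt_pos.2 hX0) hq, le_sqrt (by positivity) hX0.le, inv_pow]
  exact hX

theorem TeoC_log_three_div_two_le : TeoC (log 3 / 2) ≤ 1.15 := by
  have hcosh : cosh (log 3 / 2) = (√3 + (√3)⁻¹) / 2 := by
    rw [← log_sqrt (by norm_num), cosh_log (by positivity)]
  have hinv : (√3)⁻¹ = √3 / 3 := by
    field_simp
    norm_num
  have h3 : 1.73 < √3 := by rw [lt_sqrt (by norm_num)]; norm_num
  refine TeoC_le_of_le_cosh (c := 1.15) (by norm_num) ?_ (by norm_num) ?_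
  · rw [hcosh]
    linarith
  · nlinarith [pi_gt_three]

theorem TeoC_le_sqrt_two_of_half_le_sinh {r : ℝ} (h : 1 / 2 ≤ sinh r) : TeoC r ≤ √2 := by
  have hcosh : 1.1 ≤ cosh r := by nlinarith [cosh_sq r, cosh_pos r]
  refine TeoC_le_of_le_cosh (by norm_num) hcosh (by positivity) ?_
  rw [sq_sqrt zero_le_two]
  nlinarith [pi_gt_three]

theorem exp_neg_pi_mul_two_sub_sqrt_three_lt : exp (-(π * (2 - √3))) < 5 / 11 := by
  have h3 : √3 < 1.7321 := by rw [sqrt_lt' (by norm_num)]; norm_num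
  have hexp : 11 / 5 < exp 0.8 := by
    refine lt_of_lt_of_le ?_ (sum_le_exp_of_nonneg (by norm_num) 4)
    norm_num [Finset.sum_range_succ, Nat.factorial]
  rw [exp_neg, inv_lt_comm₀ (exp_pos _) (by norm_num), inv_div]
  exact hexp.trans (exp_lt_exp.2 (by nlinarith [pi_gt_three]))

theorem two_mul_F_le_sqrt_two_of_sinh_le_half {r : ℝ} (hr : 0 < r) (h : sinh r ≤ 1 / 2) :
    2 * F r ≤ √2 := by
  have hs : 0 < sinh r := sinh_pos_iff.2 hr
  have hcollar : exp (-(π / sinh r)) / sinh r ^ 2 ≤ 4 * exp (-(2 * π)) := by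
    refine (monotoneOn_exp_neg_div_div_sq π ⟨hs, by linarith [pi_gt_three]⟩
      ⟨by norm_num, by linarith [pi_gt_three]⟩ h).trans_eq ?_
    norm_num [div_div_eq_mul_div, mul_comm]
  have hsqrt2 : 1.41 < √2 := by rw [lt_sqrt (by norm_num)]; norm_num
  calc 2 * F r
      = 2 / 3 * exp (π * √3) * TeoC (log 3 / 2) * (exp (-(π / sinh r)) / sinh r ^ 2) := by
        rw [F, neg_div]; ring
    _ ≤ 2 / 3 * exp (π * √3) * 1.15 * (4 * exp (-(2 * π))) := by
        gcongr
        exact TeoC_log_three_div_two_le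
    _ = 46 / 15 * exp (-(π * (2 - √3))) := by
        rw [show π * (2 - √3) = -(π * √3) + 2 * π by ring, neg_add, neg_neg, exp_add]
        ring
    _ ≤ √2 := by linarith [exp_neg_pi_mul_two_sub_sqrt_three_lt]

/-- On `(0, (log 3)/2]`, `min(2F(r), C(r)) ≤ √2`. -/
theorem min_two_F_C_le :
    ∀ r : ℝ, 0 < r → r ≤ Real.log 3 / 2 →
      min (2 * F r) (TeoC r) ≤ Real.sqrt 2 := by
  intro r hr _
  rcases le_total (sinh r) (1 / 2) with h | h
  · exact (min_le_left _ _).trans (two_mul_F_le_sqrt_two_of_sinh_le_half hr h)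
  · exact (min_le_right _ _).trans (TeoC_le_sqrt_two_of_half_le_sinh h)
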